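/- Let ℓ : ℝ → ℝ be 1-Lipschitz, let σ > 0, and let ℓ_σ = ℓ ∗ φ_σ where φ_σ is the density of the centered Gaussian with variance σ². Then for every positive integer r, the r-th derivative satisfies ℓ_σ^{(r)}(θ) = σ^{−r} (−1)^r ∫ ℓ(θ − t) φ_σ(t) H_r(t/σ) dt, where H_r is the r-th (probabilists') Hermite polynomial; consequently, for all θ_1, θ_2 ∈ ℝ, |ℓ_σ^{(r)}(θ_1) − ℓ_σ^{(r)}(θ_2)| ≤ σ^{−r} |θ_1 − θ_2| √(r!). -/

import Mathlib

/-!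
Since `ℓ` grows at most linearly and every derivative of `φ_σ` is a polynomial times a Gaussian,
the derivatives of `ℓ ⋆ φ_σ` may be taken under the integral, and they fall on the kernel:
`φ_σ⁽ⁿ⁾(t) = (-σ)⁻ⁿ Hₙ(t/σ) φ_σ(t)`. The Lipschitz bound then gives
`|ℓ_σ⁽ʳ⁾(θ₁) - ℓ_σ⁽ʳ⁾(θ₂)| ≤ |θ₁ - θ₂| ∫ |φ_σ⁽ʳ⁾|`, and by Cauchy–Schwarz
`∫ |H_r(t/σ)| φ_σ(t) dt ≤ (∫ H_r(t/σ)² φ_σ(t) dt)^{1/2} = √(r!)`, the last identity by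
integration by parts using `H_{n+1}' = (n + 1) Hₙ`.
-/

open Real

noncomputable section

/-- Density of the centered Gaussian distribution with variance `σ²`. -/
def gaussPDF (σ t : ℝ) : ℝ :=
  (Real.sqrt (2 * Real.pi * σ ^ 2))⁻¹ * Real.exp (-(t ^ 2) / (2 * σ ^ 2))

/-- Gaussian smoothing: the convolution `ℓ ∗ φ_σ`. -/
def smoothed (σ : ℝ) (ℓ : ℝ → ℝ) (θ : ℝ) : ℝ := ∫ t, ℓ (θ - t) * gaussPDF σ t

open Polynomial MeasureTheory
open scoped Convolution Nat ContDiff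

def HasLinearGrowth (f : ℝ → ℝ) : Prop := ∃ C, ∀ t, |f t| ≤ C * (1 + |t|)

def HasGaussianDecay (k : ℝ → ℝ) : Prop := ∃ C b, 0 < b ∧ ∀ t, |k t| ≤ C * exp (-b * t ^ 2)

lemma LipschitzWith.hasLinearGrowth {K : NNReal} {f : ℝ → ℝ} (hf : LipschitzWith K f) :
    HasLinearGrowth f := by
  refine ⟨max |f 0| K, fun t => ?_⟩
  have h := hf.dist_le_mul t 0
  rw [Real.dist_eq, Real.dist_eq, sub_zero] at h
  have := abs_sub_abs_le_abs_sub (f t) (f 0)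
  nlinarith [le_max_left |f 0| K, le_max_right |f 0| K, abs_nonneg t, abs_nonneg (f 0)]

lemma one_add_abs_le_mul_one_add_abs_sub (x u : ℝ) : 1 + |u| ≤ (1 + |x|) * (1 + |x - u|) := by
  have := abs_sub_abs_le_abs_sub u x
  rw [abs_sub_comm] at this
  nlinarith [mul_nonneg (abs_nonneg x) (abs_nonneg (x - u))]

lemma exp_neg_mul_sq_sub_le {b x θ : ℝ} (hb : 0 ≤ b) (hx : |x - θ| ≤ 1) (u : ℝ) :
    exp (-b * (x - u) ^ 2) ≤ exp b * exp (-(b / 2) * (θ - u) ^ 2) := by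
  rw [← exp_add, exp_le_exp]
  have h1 : (x - θ) ^ 2 ≤ 1 := by nlinarith [sq_abs (x - θ), abs_nonneg (x - θ)]
  have h2 : (θ - u) ^ 2 ≤ 2 * (x - u) ^ 2 + 2 := by nlinarith [sq_nonneg (x - θ + (x - u))]
  nlinarith

lemma integrable_one_add_abs_mul_exp_neg_mul_sq {b : ℝ} (hb : 0 < b) :
    Integrable (fun t : ℝ => (1 + |t|) * exp (-b * t ^ 2)) := by
  refine ((integrable_exp_neg_mul_sq hb).add (integrable_mul_exp_neg_mul_sq hb).norm).congr
    (ae_of_all _ fun t => ?_)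
  simp only [Pi.add_apply, norm_mul, Real.norm_eq_abs, abs_of_pos (exp_pos _)]
  ring

lemma HasGaussianDecay.integrable {k : ℝ → ℝ} (hk : HasGaussianDecay k)
    (hkm : AEStronglyMeasurable k) : Integrable k := by
  obtain ⟨C, b, hb, hC⟩ := hk
  exact ((integrable_exp_neg_mul_sq hb).const_mul C).mono' hkm (ae_of_all _ hC)

lemma HasGaussianDecay.const_smul {k : ℝ → ℝ} (hk : HasGaussianDecay k) (c : ℝ) :
    HasGaussianDecay (c • k) := by
  obtain ⟨C, b, hb, hC⟩ := hk
  refine ⟨|c| * C, b, hb, fun t => ?_⟩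
  rw [Pi.smul_apply, smul_eq_mul, abs_mul, mul_assoc]
  exact mul_le_mul_of_nonneg_left (hC t) (abs_nonneg c)

lemma HasLinearGrowth.exists_integrable_bound {f k : ℝ → ℝ} (hf : HasLinearGrowth f)
    (hk : HasGaussianDecay k) (θ : ℝ) :
    ∃ g : ℝ → ℝ, Integrable g ∧ ∀ x, |x - θ| ≤ 1 → ∀ u, |f u * k (x - u)| ≤ g u := by
  obtain ⟨C, hC⟩ := hf
  obtain ⟨D, b, hb, hD⟩ := hk
  have hC0 : 0 ≤ C := by simpa using (abs_nonneg _).trans (hC 0)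
  have hD0 : 0 ≤ D := by simpa using (abs_nonneg _).trans (hD 0)
  refine ⟨fun u => C * D * exp b * (1 + |θ|) * ((1 + |θ - u|) * exp (-(b / 2) * (θ - u) ^ 2)),
    ((integrable_one_add_abs_mul_exp_neg_mul_sq (half_pos hb)).comp_sub_left θ).const_mul _,
    fun x hx u => ?_⟩
  calc |f u * k (x - u)| ≤ C * (1 + |u|) * (D * exp (-b * (x - u) ^ 2)) := by
        rw [abs_mul]
        exact mul_le_mul (hC u) (hD _) (abs_nonneg _) ((abs_nonneg _).trans (hC u))
    _ ≤ C * ((1 + |θ|) * (1 + |θ - u|)) * (D * (exp b * exp (-(b / 2) * (θ - u) ^ 2))) := by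
        gcongr
        · exact one_add_abs_le_mul_one_add_abs_sub θ u
        · exact exp_neg_mul_sq_sub_le hb.le hx u
    _ = _ := by ring

lemma HasLinearGrowth.convolutionExistsAt {f k : ℝ → ℝ} (hf : HasLinearGrowth f)
    (hfm : AEStronglyMeasurable f) (hk : HasGaussianDecay k) (hkc : Continuous k) (x : ℝ) :
    ConvolutionExistsAt f k x (ContinuousLinearMap.lsmul ℝ ℝ) volume := by
  obtain ⟨g, hg, hbound⟩ := hf.exists_integrable_bound hk x
  exact hg.mono' (hfm.mul (hkc.comp (continuous_sub_left x)).aestronglyMeasurable)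
    (ae_of_all _ fun u => hbound x (by simp) u)

lemma HasLinearGrowth.hasDerivAt_convolution {f k k' : ℝ → ℝ} (hf : HasLinearGrowth f)
    (hfm : AEStronglyMeasurable f) (hk : HasGaussianDecay k) (hk' : HasGaussianDecay k')
    (hderiv : ∀ t, HasDerivAt k (k' t) t) (θ : ℝ) :
    HasDerivAt (f ⋆ k) ((f ⋆ k') θ) θ := by
  have hkc : Continuous k := continuous_iff_continuousAt.2 fun t => (hderiv t).continuousAt
  have hk'm : Measurable k' := by
    rw [show k' = deriv k from funext fun t => (hderiv t).deriv.symm]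
    exact measurable_deriv k
  obtain ⟨g, hg, hbound⟩ := hf.exists_integrable_bound hk' θ
  refine (hasDerivAt_integral_of_dominated_loc_of_deriv_le (Metric.closedBall_mem_nhds θ one_pos)
    (.of_forall fun x => (hf.convolutionExistsAt hfm hk hkc x).aestronglyMeasurable)
    (hf.convolutionExistsAt hfm hk hkc θ)
    (hfm.mul (hk'm.comp (measurable_const_sub θ)).aestronglyMeasurable)
    (ae_of_all _ fun u x hx => hbound x hx u) hg
    (ae_of_all _ fun u x _ => ?_)).2
  simpa using ((hderiv (x - u)).comp x ((hasDerivAt_id x).sub_const u)).const_mul (f u)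

lemma HasLinearGrowth.iteratedDeriv_convolution {f k : ℝ → ℝ} (hf : HasLinearGrowth f)
    (hfm : AEStronglyMeasurable f) (hk : ContDiff ℝ ∞ k)
    (hdecay : ∀ m, HasGaussianDecay (iteratedDeriv m k)) (n : ℕ) :
    iteratedDeriv n (f ⋆ k) = f ⋆ iteratedDeriv n k := by
  induction n with
  | zero => simp
  | succ n ih =>
    ext θ
    have hderiv (t : ℝ) : HasDerivAt (iteratedDeriv n k) (iteratedDeriv (n + 1) k t) t := by
      rw [iteratedDeriv_succ]
      exact (hk.differentiable_iteratedDeriv n (mod_cast WithTop.coe_lt_top _) t).hasDerivAt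
    rw [iteratedDeriv_succ, ih]
    exact (hf.hasDerivAt_convolution hfm (hdecay n) (hdecay (n + 1)) hderiv θ).deriv

lemma LipschitzWith.abs_convolution_sub_le {K : NNReal} {f k : ℝ → ℝ} (hf : LipschitzWith K f)
    {x₁ x₂ : ℝ} (h₁ : ConvolutionExistsAt f k x₁ (ContinuousLinearMap.lsmul ℝ ℝ) volume)
    (h₂ : ConvolutionExistsAt f k x₂ (ContinuousLinearMap.lsmul ℝ ℝ) volume) (hk : Integrable k) :
    |(f ⋆ k) x₁ - (f ⋆ k) x₂| ≤ K * |x₁ - x₂| * ∫ t, |k t| := by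
  have i₁ : Integrable (fun t => f (x₁ - t) * k t) := h₁.integrable_swap
  have i₂ : Integrable (fun t => f (x₂ - t) * k t) := h₂.integrable_swap
  simp only [convolution_lsmul_swap, smul_eq_mul]
  rw [← integral_sub i₁ i₂, ← integral_const_mul, ← Real.norm_eq_abs]
  refine norm_integral_le_of_norm_le (hk.abs.const_mul _) (ae_of_all _ fun t => ?_)
  have h := hf.dist_le_mul (x₁ - t) (x₂ - t)
  rw [Real.dist_eq, Real.dist_eq, sub_sub_sub_cancel_right] at h
  simp only [← sub_mul, norm_mul, Real.norm_eq_abs]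
  exact mul_le_mul_of_nonneg_right h (abs_nonneg _)

lemma Polynomial.exists_abs_aeval_le_mul_exp {R : Type*} [CommSemiring R] [Algebra R ℝ]
    (p : R[X]) : ∃ C, ∀ x : ℝ, |aeval x p| ≤ C * exp |x| := by
  induction p using Polynomial.induction_on' with
  | add p q hp hq =>
    obtain ⟨C, hC⟩ := hp
    obtain ⟨D, hD⟩ := hq
    exact ⟨C + D, fun x => by
      rw [map_add, add_mul]; exact (abs_add_le _ _).trans (add_le_add (hC x) (hD x))⟩
  | monomial n c =>
    refine ⟨|algebraMap R ℝ c| * n !, fun x => ?_⟩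
    have h := pow_div_factorial_le_exp _ (abs_nonneg x) n
    rw [div_le_iff₀ (by positivity)] at h
    rw [aeval_monomial, abs_mul, abs_pow, mul_assoc]
    exact mul_le_mul_of_nonneg_left (by linarith) (abs_nonneg _)

lemma gaussPDF_nonneg (σ t : ℝ) : 0 ≤ gaussPDF σ t := by
  unfold gaussPDF; positivity

lemma contDiff_gaussPDF (σ : ℝ) : ContDiff ℝ ∞ (gaussPDF σ) := by
  unfold gaussPDF; fun_prop

lemma integral_gaussPDF {σ : ℝ} (hσ : σ ≠ 0) : ∫ t, gaussPDF σ t = 1 := by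
  have hv : 0 < σ ^ 2 := by positivity
  have h := ProbabilityTheory.integral_gaussianPDFReal_eq_one 0 (Real.toNNReal_pos.2 hv).ne'
  simpa [ProbabilityTheory.gaussianPDFReal, gaussPDF, Real.coe_toNNReal _ hv.le] using h

lemma hasDerivAt_gaussPDF (σ t : ℝ) :
    HasDerivAt (gaussPDF σ) (-(t / σ ^ 2) * gaussPDF σ t) t := by
  have h := (((hasDerivAt_pow 2 t).neg.div_const (2 * σ ^ 2)).exp).const_mul
    (√(2 * π * σ ^ 2))⁻¹
  refine h.congr_deriv ?_
  simp only [gaussPDF, Pi.neg_apply]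
  ring

lemma hasDerivAt_aeval_div {R : Type*} [CommSemiring R] [Algebra R ℝ] (p : R[X]) (σ t : ℝ) :
    HasDerivAt (fun t => aeval (t / σ) p) (aeval (t / σ) (derivative p) / σ) t := by
  simpa [Function.comp_def, div_eq_mul_inv] using
    (p.hasDerivAt_aeval (t / σ)).comp t ((hasDerivAt_id t).div_const σ)

lemma derivative_hermite_succ (n : ℕ) :
    derivative (hermite (n + 1)) = (n + 1) • hermite n := by
  induction n with
  | zero => simp
  | succ n ih =>
    rw [hermite_succ (n + 1), derivative_sub, derivative_mul, derivative_X, one_mul, ih,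
      derivative_smul, show derivative (hermite n) = X * hermite n - hermite (n + 1) by
        rw [hermite_succ n]; ring]
    simp only [nsmul_eq_mul]
    push_cast
    ring

def hermiteKernel (σ : ℝ) (n : ℕ) (t : ℝ) : ℝ := aeval (t / σ) (hermite n) * gaussPDF σ t

lemma hasDerivAt_hermiteKernel (σ : ℝ) (n : ℕ) (t : ℝ) :
    HasDerivAt (hermiteKernel σ n) (-σ⁻¹ * hermiteKernel σ (n + 1) t) t := by
  refine ((hasDerivAt_aeval_div (hermite n) σ t).mul (hasDerivAt_gaussPDF σ t)).congr_deriv ?_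
  rw [hermiteKernel, hermite_succ]
  simp only [map_sub, map_mul, aeval_X]
  ring

lemma iteratedDeriv_gaussPDF (σ : ℝ) (n : ℕ) :
    iteratedDeriv n (gaussPDF σ) = (-σ⁻¹) ^ n • hermiteKernel σ n := by
  induction n with
  | zero => ext t; simp [hermiteKernel]
  | succ n ih =>
    ext t
    rw [iteratedDeriv_succ, ih, ((hasDerivAt_hermiteKernel σ n t).const_smul _).deriv]
    simp only [Pi.smul_apply, smul_eq_mul]
    ring

lemma hasGaussianDecay_aeval_mul_gaussPDF {σ : ℝ} (hσ : σ ≠ 0) (p : ℤ[X]) :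
    HasGaussianDecay (fun t => aeval (t / σ) p * gaussPDF σ t) := by
  obtain ⟨C, hC⟩ := p.exists_abs_aeval_le_mul_exp
  have hC0 : 0 ≤ C := by simpa using (abs_nonneg _).trans (hC 0)
  refine ⟨C * exp 1 * (√(2 * π * σ ^ 2))⁻¹, (4 * σ ^ 2)⁻¹, by positivity, fun t => ?_⟩
  have hlin : |t / σ| ≤ 1 + (t / σ) ^ 2 / 4 := by
    nlinarith [sq_nonneg (|t / σ| - 2), sq_abs (t / σ)]
  have hexp : 1 + (t / σ) ^ 2 / 4 + -t ^ 2 / (2 * σ ^ 2) = 1 + -(4 * σ ^ 2)⁻¹ * t ^ 2 := by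
    field_simp
    ring
  rw [abs_mul, abs_of_nonneg (gaussPDF_nonneg σ t)]
  calc |aeval (t / σ) p| * gaussPDF σ t
      ≤ C * exp (1 + (t / σ) ^ 2 / 4) * gaussPDF σ t := by
        gcongr
        · exact gaussPDF_nonneg σ t
        · exact (hC _).trans (by gcongr)
    _ = C * (√(2 * π * σ ^ 2))⁻¹ * exp (1 + (t / σ) ^ 2 / 4 + -t ^ 2 / (2 * σ ^ 2)) := by
        rw [gaussPDF, exp_add (1 + _)]
        ring
    _ = _ := by
        rw [hexp, exp_add]
        ring

lemma integrable_aeval_mul_gaussPDF {σ : ℝ} (hσ : σ ≠ 0) (p : ℤ[X]) :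
    Integrable (fun t => aeval (t / σ) p * gaussPDF σ t) :=
  (hasGaussianDecay_aeval_mul_gaussPDF hσ p).integrable
    ((p.continuous_aeval.comp (continuous_id.div_const σ)).mul
      (contDiff_gaussPDF σ).continuous).aestronglyMeasurable

lemma hasGaussianDecay_iteratedDeriv_gaussPDF {σ : ℝ} (hσ : σ ≠ 0) (n : ℕ) :
    HasGaussianDecay (iteratedDeriv n (gaussPDF σ)) := by
  rw [iteratedDeriv_gaussPDF]
  exact (hasGaussianDecay_aeval_mul_gaussPDF hσ (hermite n)).const_smul _

lemma integral_aeval_hermite_mul_hermiteKernel {σ : ℝ} (hσ : σ ≠ 0) (n : ℕ) :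
    ∫ t, aeval (t / σ) (hermite n) * hermiteKernel σ n t = n ! := by
  induction n with
  | zero => simp [hermiteKernel, integral_gaussPDF hσ]
  | succ n ih =>
    have hu (t : ℝ) : HasDerivAt (fun t => aeval (t / σ) (hermite (n + 1)))
        ((n + 1) * σ⁻¹ * aeval (t / σ) (hermite n)) t := by
      refine (hasDerivAt_aeval_div _ σ t).congr_deriv ?_
      rw [derivative_hermite_succ, map_nsmul, nsmul_eq_mul]
      push_cast
      ring
    have hint (c : ℝ) (p : ℤ[X]) (m : ℕ) :
        Integrable (fun t => c * (aeval (t / σ) p * hermiteKernel σ m t)) := by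
      simpa only [hermiteKernel, map_mul, mul_assoc] using
        (integrable_aeval_mul_gaussPDF hσ (p * hermite m)).const_mul c
    have hibp := integral_mul_deriv_eq_deriv_mul_of_integrable (fun t _ => hu t)
      (fun t _ => hasDerivAt_hermiteKernel σ n t)
      ((hint (-σ⁻¹) (hermite (n + 1)) (n + 1)).congr (ae_of_all _ fun t => by
        simp only [Pi.mul_apply]; ring))
      ((hint ((n + 1) * σ⁻¹) (hermite n) n).congr (ae_of_all _ fun t => by
        simp only [Pi.mul_apply]; ring))
      ((hint 1 (hermite (n + 1)) n).congr (ae_of_all _ fun t => by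
        simp only [Pi.mul_apply]; ring))
    have hleft : ∫ t, aeval (t / σ) (hermite (n + 1)) * (-σ⁻¹ * hermiteKernel σ (n + 1) t) =
        -σ⁻¹ * ∫ t, aeval (t / σ) (hermite (n + 1)) * hermiteKernel σ (n + 1) t := by
      rw [← integral_const_mul]; congr 1; ext t; ring
    have hright : ∫ t, (n + 1) * σ⁻¹ * aeval (t / σ) (hermite n) * hermiteKernel σ n t =
        (n + 1) * σ⁻¹ * n ! := by
      rw [← ih, ← integral_const_mul]; congr 1; ext t; ring
    rw [hleft, hright] at hibp
    rw [← mul_right_inj' (inv_ne_zero hσ), Nat.factorial_succ]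
    push_cast
    linarith

lemma integral_abs_hermiteKernel_le {σ : ℝ} (hσ : σ ≠ 0) (n : ℕ) :
    ∫ t, |hermiteKernel σ n t| ≤ √(n ! : ℝ) := by
  set c := √(n ! : ℝ)
  have hc : 0 < c := by positivity
  have hc2 : c ^ 2 = n ! := Real.sq_sqrt (by positivity)
  -- AM-GM `2 c |h| ≤ h² + c²`, integrated against `gaussPDF σ`, with `c² = n!`
  have hpoint (t : ℝ) : 2 * c * |hermiteKernel σ n t| ≤
      aeval (t / σ) (hermite n) * hermiteKernel σ n t + c ^ 2 * gaussPDF σ t := by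
    have hφ := gaussPDF_nonneg σ t
    rw [hermiteKernel, abs_mul, abs_of_nonneg hφ]
    nlinarith [mul_nonneg (sq_nonneg (|aeval (t / σ) (hermite n)| - c)) hφ,
      sq_abs (aeval (t / σ) (hermite n))]
  have hK : Integrable (hermiteKernel σ n) := integrable_aeval_mul_gaussPDF hσ (hermite n)
  have hHK : Integrable (fun t => aeval (t / σ) (hermite n) * hermiteKernel σ n t) := by
    simpa only [hermiteKernel, map_mul, mul_assoc] using
      integrable_aeval_mul_gaussPDF hσ (hermite n * hermite n)
  have hφ : Integrable (fun t => c ^ 2 * gaussPDF σ t) := by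
    simpa using (integrable_aeval_mul_gaussPDF hσ 1).const_mul (c ^ 2)
  have h : ∫ t, 2 * c * |hermiteKernel σ n t| ≤
      ∫ t, (aeval (t / σ) (hermite n) * hermiteKernel σ n t + c ^ 2 * gaussPDF σ t) :=
    integral_mono (hK.abs.const_mul (2 * c)) (hHK.add hφ) hpoint
  rw [integral_const_mul, integral_add hHK hφ, integral_const_mul,
    integral_aeval_hermite_mul_hermiteKernel hσ, integral_gaussPDF hσ] at h
  nlinarith

lemma integral_abs_iteratedDeriv_gaussPDF_le {σ : ℝ} (hσ : 0 < σ) (n : ℕ) :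
    ∫ t, |iteratedDeriv n (gaussPDF σ) t| ≤ (σ ^ n)⁻¹ * √(n ! : ℝ) := by
  simp only [iteratedDeriv_gaussPDF, Pi.smul_apply, smul_eq_mul, abs_mul, integral_const_mul,
    abs_pow, abs_neg, abs_inv, abs_of_pos hσ, inv_pow]
  exact mul_le_mul_of_nonneg_left (integral_abs_hermiteKernel_le hσ.ne' n) (by positivity)

theorem stmt_17_general (ℓ : ℝ → ℝ) (hℓ : LipschitzWith 1 ℓ) (σ : ℝ) (hσ : 0 < σ)
    (r : ℕ) :
    (∀ θ : ℝ,
      iteratedDeriv r (smoothed σ ℓ) θ =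
        (σ ^ r)⁻¹ * (-1 : ℝ) ^ r *
          ∫ t, ℓ (θ - t) * gaussPDF σ t *
            (Polynomial.aeval (t / σ) (Polynomial.hermite r) : ℝ)) ∧
    (∀ θ₁ θ₂ : ℝ,
      |iteratedDeriv r (smoothed σ ℓ) θ₁ - iteratedDeriv r (smoothed σ ℓ) θ₂| ≤
        (σ ^ r)⁻¹ * |θ₁ - θ₂| * Real.sqrt (Nat.factorial r)) := by
  have hℓm : AEStronglyMeasurable ℓ := hℓ.continuous.aestronglyMeasurable
  have hdecay := hasGaussianDecay_iteratedDeriv_gaussPDF hσ.ne'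
  have hderiv : iteratedDeriv r (smoothed σ ℓ) = ℓ ⋆ iteratedDeriv r (gaussPDF σ) := by
    rw [show smoothed σ ℓ = ℓ ⋆ gaussPDF σ by
      ext θ; simp only [smoothed, convolution_lsmul_swap, smul_eq_mul]]
    exact hℓ.hasLinearGrowth.iteratedDeriv_convolution hℓm (contDiff_gaussPDF σ) hdecay r
  refine ⟨fun θ => ?_, fun θ₁ θ₂ => ?_⟩
  · rw [hderiv, iteratedDeriv_gaussPDF, convolution_smul, Pi.smul_apply, convolution_lsmul_swap,
      smul_eq_mul, ← integral_const_mul, ← integral_const_mul]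
    congr 1
    ext t
    rw [smul_eq_mul, hermiteKernel, neg_pow, inv_pow]
    ring
  · have hcont := (contDiff_gaussPDF σ).continuous_iteratedDeriv r (by exact_mod_cast le_top)
    have hexists := hℓ.hasLinearGrowth.convolutionExistsAt hℓm (hdecay r) hcont
    rw [hderiv]
    calc _ ≤ 1 * |θ₁ - θ₂| * ∫ t, |iteratedDeriv r (gaussPDF σ) t| :=
          hℓ.abs_convolution_sub_le (hexists θ₁) (hexists θ₂)
            ((hdecay r).integrable hcont.aestronglyMeasurable)
      _ ≤ |θ₁ - θ₂| * ((σ ^ r)⁻¹ * √(r ! : ℝ)) := by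
          rw [one_mul]
          exact mul_le_mul_of_nonneg_left (integral_abs_iteratedDeriv_gaussPDF_le hσ r)
            (abs_nonneg _)
      _ = _ := by ring

/-- derivatives of Gaussian-smoothed Lipschitz functions via
Hermite polynomials, from the proof of Lemma 2.  For 1-Lipschitz `ℓ` and
`σ > 0`, the `r`-th derivative of `ℓ_σ = ℓ ∗ φ_σ` equals
`σ^{-r} (-1)^r ∫ ℓ(θ−t) φ_σ(t) H_r(t/σ) dt`, and consequently
`|ℓ_σ^{(r)}(θ₁) − ℓ_σ^{(r)}(θ₂)| ≤ σ^{-r} |θ₁ − θ₂| √(r!)`. -/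
theorem stmt_17 (ℓ : ℝ → ℝ) (hℓ : LipschitzWith 1 ℓ) (σ : ℝ) (hσ : 0 < σ)
    (r : ℕ) (hr : 1 ≤ r) :
    (∀ θ : ℝ,
      iteratedDeriv r (smoothed σ ℓ) θ =
        (σ ^ r)⁻¹ * (-1 : ℝ) ^ r *
          ∫ t, ℓ (θ - t) * gaussPDF σ t *
            (Polynomial.aeval (t / σ) (Polynomial.hermite r) : ℝ)) ∧
    (∀ θ₁ θ₂ : ℝ,
      |iteratedDeriv r (smoothed σ ℓ) θ₁ - iteratedDeriv r (smoothed σ ℓ) θ₂| ≤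
        (σ ^ r)⁻¹ * |θ₁ - θ₂| * Real.sqrt (Nat.factorial r)) :=
  stmt_17_general ℓ hℓ σ hσ r
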